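/- Yokouchi-Hikita interpretation lemma: let R and S be reduction relations on a set X with R confluent and strongly normalizing, and S satisfying the diamond property (if t S u and t S v then there is s with u S s and v S s). Suppose furthermore that whenever t S u and t R v there is an s such that u R* s and v (R* ; S ; R*) s. Then the composite relation R* ; S ; R* is confluent. -/

import Mathlib

/-!
Write `S/R` for `R* ; S ; R*`. Noetherian induction along `R` first shows that a single `S`-step
commutes with `R*` up to `S/R`, and hence (joining with the confluence of `R`) so does an
`S/R`-step. Then `S/R` has the diamond property, again by noetherian induction on the common
source: if one of the two `S/R`-steps begins with an `R`-step `x → x₁`, push the other step to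
`x₁` and use the induction hypothesis at `x₁`; otherwise both begin with an `S`-step and the
diamond property of `S` applies. The diamond property of `S/R` gives its confluence.
-/

namespace Relation

variable {X : Type*} {R S : X → X → Prop}

/-- `S` modulo `R`, usually written `S/R`. -/
def Modulo (S R : X → X → Prop) (x y : X) : Prop :=
  ∃ a b, ReflTransGen R x a ∧ S a b ∧ ReflTransGen R b y

namespace Modulo

theorem of_rel {x y : X} (h : S x y) : Modulo S R x y :=
  ⟨x, y, .refl, h, .refl⟩

theorem head_reflTransGen {x y z : X} (hxy : ReflTransGen R x y) :
    Modulo S R y z → Modulo S R x z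
  | ⟨a, b, hya, hab, hbz⟩ => ⟨a, b, hxy.trans hya, hab, hbz⟩

theorem tail_reflTransGen {x y z : X} :
    Modulo S R x y → ReflTransGen R y z → Modulo S R x z
  | ⟨a, b, hxa, hab, hby⟩, hyz => ⟨a, b, hxa, hab, hby.trans hyz⟩

theorem cases_head {x y : X} :
    Modulo S R x y → (∃ b, S x b ∧ ReflTransGen R b y) ∨ ∃ x₁, R x x₁ ∧ Modulo S R x₁ y
  | ⟨a, b, hxa, hab, hby⟩ => by
    rcases hxa.cases_head with rfl | ⟨x₁, hxx₁, hx₁a⟩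
    · exact .inl ⟨b, hab, hby⟩
    · exact .inr ⟨x₁, hxx₁, a, b, hx₁a, hab, hby⟩

variable (hwf : WellFounded (flip R))
  (hR : ∀ x u v, ReflTransGen R x u → ReflTransGen R x v → Join (ReflTransGen R) u v)
  (hSR : ∀ t u v, S t u → R t v → ∃ s, ReflTransGen R u s ∧ Modulo S R v s)
include hwf hR hSR

theorem exists_of_rel_of_reflTransGen {x u v : X} (hxu : S x u) (hxv : ReflTransGen R x v) :
    ∃ t, ReflTransGen R u t ∧ Modulo S R v t := by
  induction x using hwf.transGen.induction generalizing u v with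
  | _ x ih =>
  rcases hxv.cases_head with rfl | ⟨x₁, hxx₁, hx₁v⟩
  · exact ⟨u, .refl, .of_rel hxu⟩
  obtain ⟨s, hus, a, b, hx₁a, hab, hbs⟩ := hSR x u x₁ hxu hxx₁
  obtain ⟨w, haw, hvw⟩ := hR _ _ _ hx₁a hx₁v
  have hax : TransGen (flip R) a x := transGen_swap.mpr (.head' hxx₁ hx₁a)
  obtain ⟨t', hbt', hwt'⟩ := ih a hax hab haw
  obtain ⟨t, hst, ht't⟩ := hR _ _ _ hbs hbt'
  exact ⟨t, hus.trans hst, head_reflTransGen hvw (hwt'.tail_reflTransGen ht't)⟩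

theorem exists_of_reflTransGen {x u y : X} (hxu : Modulo S R x u) (hxy : ReflTransGen R x y) :
    ∃ t, ReflTransGen R u t ∧ Modulo S R y t := by
  obtain ⟨a, b, hxa, hab, hbu⟩ := hxu
  obtain ⟨p, hap, hyp⟩ := hR _ _ _ hxa hxy
  obtain ⟨q, hbq, hpq⟩ := exists_of_rel_of_reflTransGen hwf hR hSR hab hap
  obtain ⟨t, hut, hqt⟩ := hR _ _ _ hbu hbq
  exact ⟨t, hut, head_reflTransGen hyp (hpq.tail_reflTransGen hqt)⟩

theorem diamond (hS : ∀ t u v, S t u → S t v → ∃ s, S u s ∧ S v s) {x u v : X}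
    (hxu : Modulo S R x u) (hxv : Modulo S R x v) : Join (Modulo S R) u v := by
  induction x using hwf.induction generalizing u v with
  | _ x ih =>
  have of_head_rel : ∀ {u v}, (∃ x₁, R x x₁ ∧ Modulo S R x₁ u) → Modulo S R x v →
      Join (Modulo S R) u v := by
    rintro u v ⟨x₁, hxx₁, hx₁u⟩ hxv
    obtain ⟨z, hvz, hx₁z⟩ := exists_of_reflTransGen hwf hR hSR hxv (.single hxx₁)
    obtain ⟨t, hut, hzt⟩ := ih x₁ hxx₁ hx₁u hx₁z
    exact ⟨t, hut, head_reflTransGen hvz hzt⟩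
  rcases hxu.cases_head with ⟨b, hxb, hbu⟩ | hu
  · rcases hxv.cases_head with ⟨b', hxb', hb'v⟩ | hv
    · obtain ⟨s, hbs, hb's⟩ := hS x b b' hxb hxb'
      obtain ⟨w, hsw, huw⟩ := exists_of_reflTransGen hwf hR hSR (.of_rel hbs) hbu
      obtain ⟨w', hsw', hvw'⟩ := exists_of_reflTransGen hwf hR hSR (.of_rel hb's) hb'v
      obtain ⟨t, hwt, hw't⟩ := hR _ _ _ hsw hsw'
      exact ⟨t, huw.tail_reflTransGen hwt, hvw'.tail_reflTransGen hw't⟩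
    · exact Join.symm.symm _ _ (of_head_rel hv hxu)
  · exact of_head_rel hu hxv

theorem confluent (hS : ∀ t u v, S t u → S t v → ∃ s, S u s ∧ S v s) {x u v : X}
    (hxu : ReflTransGen (Modulo S R) x u) (hxv : ReflTransGen (Modulo S R) x v) :
    Join (ReflTransGen (Modulo S R)) u v :=
  church_rosser (fun _ _ _ hab hac ↦
    let ⟨d, hbd, hcd⟩ := diamond hwf hR hSR hS hab hac
    ⟨d, .single hbd, .single hcd⟩) hxu hxv

end Modulo

end Relation

/-- Yokouchi-Hikita interpretation lemma: if R is confluent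
and strongly normalizing, S has the diamond property, and whenever t S u and
t R v there is s with u R* s and v (R* ; S ; R*) s, then the composite
relation C = (R* ; S ; R*) is confluent. -/
theorem yokouchi_hikita {X : Type*} (R S C : X → X → Prop)
    (hC : ∀ x y : X, C x y ↔ ∃ a b : X,
        Relation.ReflTransGen R x a ∧ S a b ∧ Relation.ReflTransGen R b y)
    (hSN : ∀ f : ℕ → X, ¬ (∀ n : ℕ, R (f n) (f (n + 1))))
    (hRconf : ∀ x u v : X, Relation.ReflTransGen R x u →
        Relation.ReflTransGen R x v →
        ∃ t, Relation.ReflTransGen R u t ∧ Relation.ReflTransGen R v t)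
    (hSdia : ∀ t u v : X, S t u → S t v → ∃ s, S u s ∧ S v s)
    (hComm : ∀ t u v : X, S t u → R t v →
        ∃ s, Relation.ReflTransGen R u s ∧ C v s) :
    ∀ x u v : X, Relation.ReflTransGen C x u → Relation.ReflTransGen C x v →
      ∃ t, Relation.ReflTransGen C u t ∧ Relation.ReflTransGen C v t := by
  obtain rfl : C = Relation.Modulo S R := funext₂ fun x y ↦ propext (hC x y)
  have hwf : WellFounded (flip R) :=
    wellFounded_iff_isEmpty_descending_chain.mpr ⟨fun ⟨f, hf⟩ ↦ hSN f hf⟩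
  exact fun _ _ _ ↦ Relation.Modulo.confluent hwf hRconf hComm hSdia
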